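/- arXiv:1708.00451 — 5 statements merged into one kernel-verified Lean document; each statement's English description precedes it below -/
import Mathlib

section
/- Let S be a site and Π a set of objects of S such that the pair (S,Π) is factorable, i.e. every object of S admits a covering {s_i → s} in which each s_i admits a morphism to some object of Π. Let S^Π be the factorable subcategory: the full subcategory of S consisting of those objects admitting a morphism to some object of Π, equipped with the induced topology. Then the restriction functor Sh(S) → Sh(S^Π) along the inclusion S^Π ↪ S is an equivalence of categories. -/
open CategoryTheory

universe v u

/-- **Restriction to the factorable subcategory.**
Let `S` be a site and `Π` a set of objects of `S` such that `(S, Π)` is factorable: every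
object of `S` admits a covering `{sᵢ → s}` in which each `sᵢ` admits a morphism to some
object of `Π`.  Let `S^Π` be the factorable subcategory (the full subcategory of objects
admitting a morphism to some object of `Π`), equipped with the induced topology `J'`
(a family of maps in `S^Π` is covering iff it is covering in `S`).  Then the restriction
functor `Sh(S) → Sh(S^Π)` along the inclusion `S^Π ↪ S` is an equivalence of categories. -/
theorem restriction_to_factorable_subcategory_is_equivalence
    {S : Type u} [Category.{v} S] (J : GrothendieckTopology S) (Pi : Set S)
    -- `(S, Π)` is factorable: every object admits a `Π`-factorable covering
    (hfact : ∀ t : S, ∃ R : Presieve t,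
      Sieve.generate R ∈ J t ∧ ∀ ⦃s : S⦄ (f : s ⟶ t), R f → ∃ p ∈ Pi, Nonempty (s ⟶ p))
    -- `J'` is the induced topology on the factorable subcategory `S^Π`
    (J' : GrothendieckTopology (ObjectProperty.FullSubcategory (fun s : S => ∃ p ∈ Pi, Nonempty (s ⟶ p))))
    (hJ' : ∀ (s : ObjectProperty.FullSubcategory (fun s : S => ∃ p ∈ Pi, Nonempty (s ⟶ p))) (T : Sieve s),
      T ∈ J' s ↔ T.functorPushforward (ObjectProperty.ι _) ∈ J s.obj) :
    -- the restriction functor `Sh(S) → Sh(S^Π)` is an equivalence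
    ∃ (ρ : Sheaf J (Type (max u v)) ⥤ Sheaf J' (Type (max u v)))
      (hρ : ∀ F : Sheaf J (Type (max u v)),
        (ρ.obj F).val = (ObjectProperty.ι _).op ⋙ F.val),
      (∀ (F G : Sheaf J (Type (max u v))) (φ : F ⟶ G),
        (ρ.map φ).hom =
          eqToHom (hρ F) ≫ Functor.whiskerLeft (ObjectProperty.ι _).op φ.hom ≫
            eqToHom (hρ G).symm) ∧
      ρ.IsEquivalence := by
  let G := ObjectProperty.ι (fun s : S => ∃ p ∈ Pi, Nonempty (s ⟶ p))
  haveI hcd : G.IsCoverDense J := by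
    constructor
    intro U
    obtain ⟨R, hR, hfac⟩ := hfact U
    refine J.superset_covering ?_ hR
    rintro Y g ⟨Z, h, f, hf, rfl⟩
    exact ⟨⟨⟨Z, hfac f hf⟩, h, f, rfl⟩⟩
  have hJ'eq : J' = G.inducedTopology J := by
    ext s T
    exact (hJ' s T).trans (Functor.mem_inducedTopology_iff_of_isCoverDense (G := G) (K := J) T).symm
  subst hJ'eq
  haveI : G.IsDenseSubsite (G.inducedTopology J) J := inferInstance
  refine ⟨G.sheafPushforwardContinuous (Type (max u v)) (G.inducedTopology J) J,
    fun F => rfl, fun F F' φ => by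
      rfl, ?_⟩
  exact (Functor.IsDenseSubsite.sheafEquiv (G.inducedTopology J) J G
    (Type (max u v))).isEquivalence_inverse
end

section
/- Let Γ be a finite tree with vertex set V and at least one vertex, and let d be an integer. Suppose that to each pair (e,u) of an edge e of Γ and an endpoint u of e there is assigned an integer md(e,u) such that md(e,u) + md(e,v) = d whenever u and v are the two endpoints of e. Then there exists a unique function f : V → ℤ such that (i) the sum of f over all of V equals d, and (ii) for every edge e and endpoint u of e, the sum of f over the side Y(e,u) equals md(e,u). -/
open Finset SimpleGraph

/-- The side `Y(e,u)`: vertex set of the connected component containing `u` of the graph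
obtained from `G` by deleting the edge `e`. -/
def treeSide {V : Type*} (G : SimpleGraph V) (e : Sym2 V) (u : V) : Set V :=
  {w | (G.deleteEdges {e}).Reachable u w}

section Helpers

variable {V : Type*} [DecidableEq V] {G : SimpleGraph V}

lemma mem_treeSide {e : Sym2 V} {u x : V} :
    x ∈ treeSide G e u ↔ ∃ p : G.Walk u x, e ∉ p.edges := by
  constructor
  · rintro ⟨q⟩
    refine ⟨q.transfer G (fun e' he' => ?_), ?_⟩
    · have := q.edges_subset_edgeSet he'
      rw [SimpleGraph.edgeSet_deleteEdges] at this
      exact this.1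
    · rw [SimpleGraph.Walk.edges_transfer]
      intro h
      have := q.edges_subset_edgeSet h
      rw [SimpleGraph.edgeSet_deleteEdges] at this
      exact this.2 rfl
  · rintro ⟨p, hp⟩
    exact ⟨p.toDeleteEdges {e} (fun e' he' h => hp (h ▸ he'))⟩

lemma self_mem_treeSide {e : Sym2 V} {u : V} : u ∈ treeSide G e u := SimpleGraph.Reachable.refl u

lemma adj_cons_isPath {u w : V} (h : G.Adj u w) :
    (SimpleGraph.Walk.cons h SimpleGraph.Walk.nil).IsPath := by
  simp [SimpleGraph.Walk.cons_isPath_iff, h.ne]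

/-- From membership in a neighbor's side, get a path avoiding `u` entirely. -/
lemma treeSide_path (hG : G.IsTree) {u w x : V} (h : G.Adj u w)
    (hx : x ∈ treeSide G s(u, w) w) :
    ∃ p : G.Walk w x, p.IsPath ∧ u ∉ p.support := by
  classical
  obtain ⟨q, hq⟩ := mem_treeSide.1 hx
  refine ⟨q.bypass, q.bypass_isPath, fun hu => ?_⟩
  have hedge : s(u, w) ∉ q.bypass.edges := fun h' => hq (q.edges_bypass_subset h')
  have ht : (q.bypass.takeUntil u hu).IsPath := q.bypass_isPath.takeUntil hu
  have huniq : q.bypass.takeUntil u hu = SimpleGraph.Walk.cons h.symm SimpleGraph.Walk.nil :=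
    (hG.existsUnique_path w u).unique ht (adj_cons_isPath h.symm)
  apply hedge
  apply SimpleGraph.Walk.edges_takeUntil_subset q.bypass hu
  rw [huniq]
  simp [Sym2.eq_swap]

lemma u_not_mem_treeSide (hG : G.IsTree) {u w : V} (h : G.Adj u w) :
    u ∉ treeSide G s(u, w) w := by
  intro hu
  obtain ⟨p, _, hns⟩ := treeSide_path hG h hu
  exact hns p.end_mem_support

/-- Cover: a path from `u` to `x ≠ u` puts `x` in the side of its first step. -/
lemma exists_treeSide_of_path {u x : V} (hx : x ≠ u) (p : G.Walk u x) (hp : p.IsPath) :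
    ∃ w, ∃ _ : G.Adj u w, s(u, w) ∈ p.edges ∧ x ∈ treeSide G s(u, w) w := by
  cases p with
  | nil => exact absurd rfl hx
  | cons h q =>
    rename_i w
    rw [SimpleGraph.Walk.cons_isPath_iff] at hp
    refine ⟨w, h, by simp, mem_treeSide.2 ⟨q, fun he => ?_⟩⟩
    exact hp.2 (q.fst_mem_support_of_mem_edges he)

lemma exists_treeSide (hG : G.IsTree) {u x : V} (hx : x ≠ u) :
    ∃ w, G.Adj u w ∧ x ∈ treeSide G s(u, w) w := by
  obtain ⟨p, hp, -⟩ := (hG.existsUnique_path u x)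
  obtain ⟨w, hadj, -, hm⟩ := exists_treeSide_of_path hx p hp
  exact ⟨w, hadj, hm⟩

lemma exists_treeSide_ne (hG : G.IsTree) {u v x : V} (huv : G.Adj u v)
    (hx : x ∈ treeSide G s(u, v) u) (hxu : x ≠ u) :
    ∃ w, G.Adj u w ∧ w ≠ v ∧ x ∈ treeSide G s(u, w) w := by
  obtain ⟨q, hq⟩ := mem_treeSide.1 hx
  have hq' : s(u, v) ∉ q.bypass.edges := fun h' => hq (q.edges_bypass_subset h')
  obtain ⟨w, hadj, hmem, hside⟩ := exists_treeSide_of_path hxu q.bypass q.bypass_isPath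
  refine ⟨w, hadj, fun hw => hq' ?_, hside⟩
  rwa [← hw]

lemma treeSide_subset (hG : G.IsTree) {u v w : V} (huv : G.Adj u v) (huw : G.Adj u w)
    (hne : w ≠ v) : treeSide G s(u, w) w ⊆ treeSide G s(u, v) u := by
  intro x hx
  obtain ⟨p, hp, hns⟩ := treeSide_path hG huw hx
  refine mem_treeSide.2 ⟨SimpleGraph.Walk.cons huw p, ?_⟩
  rw [SimpleGraph.Walk.edges_cons]
  intro hmem
  rcases List.mem_cons.1 hmem with h | h
  · exact hne (Sym2.congr_right.1 h.symm)
  · exact hns (p.fst_mem_support_of_mem_edges h)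

lemma treeSide_disjoint (hG : G.IsTree) {u w w' : V} (hw : G.Adj u w) (hw' : G.Adj u w')
    (hne : w ≠ w') : Disjoint (treeSide G s(u, w) w) (treeSide G s(u, w') w') := by
  rw [Set.disjoint_left]
  intro x hx hx'
  obtain ⟨p, hp, hns⟩ := treeSide_path hG hw hx
  obtain ⟨p', hp', hns'⟩ := treeSide_path hG hw' hx'
  have hrp : (p.append p'.reverse).bypass.IsPath := (p.append p'.reverse).bypass_isPath
  have hur : u ∉ (p.append p'.reverse).bypass.support := by
    intro hu
    have := (p.append p'.reverse).support_bypass_subset hu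
    rw [SimpleGraph.Walk.mem_support_append_iff, SimpleGraph.Walk.support_reverse] at this
    rcases this with h | h
    · exact hns h
    · exact hns' (List.mem_reverse.1 h)
  have hc : (SimpleGraph.Walk.cons hw.symm (SimpleGraph.Walk.cons hw' SimpleGraph.Walk.nil)
      : G.Walk w w').IsPath := by
    simp [SimpleGraph.Walk.cons_isPath_iff, hw.ne, hw.ne', hw'.ne, hw'.ne', hne, hne.symm]
  have := (hG.existsUnique_path w w').unique hrp hc
  apply hur
  rw [this, SimpleGraph.Walk.support_cons]
  exact List.mem_cons_of_mem _ ((SimpleGraph.Walk.cons hw' SimpleGraph.Walk.nil).start_mem_support)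

variable [Fintype V] [DecidableRel G.Adj]

lemma pairwiseDisjoint_sides (hG : G.IsTree) (u : V) (s : Finset V)
    (hs : s ⊆ G.neighborFinset u) :
    (↑s : Set V).PairwiseDisjoint
      (fun w => (Set.toFinite (treeSide G s(u, w) w)).toFinset) := by
  intro w hw w' hw' hne
  simp only [Function.onFun]
  rw [Set.Finite.disjoint_toFinset]
  exact treeSide_disjoint hG
    ((SimpleGraph.mem_neighborFinset _ _ _).1 (hs hw))
    ((SimpleGraph.mem_neighborFinset _ _ _).1 (hs hw')) hne

lemma not_mem_biUnion_sides (hG : G.IsTree) (u : V) (s : Finset V)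
    (hs : s ⊆ G.neighborFinset u) :
    u ∉ s.biUnion (fun w => (Set.toFinite (treeSide G s(u, w) w)).toFinset) := by
  intro hu
  obtain ⟨w, hw, hmem⟩ := Finset.mem_biUnion.1 hu
  rw [Set.Finite.mem_toFinset] at hmem
  exact u_not_mem_treeSide hG ((SimpleGraph.mem_neighborFinset _ _ _).1 (hs hw)) hmem

lemma sum_partition (hG : G.IsTree) (g : V → ℤ) (u : V) :
    ∑ v : V, g v = g u + ∑ w ∈ G.neighborFinset u,
      ∑ x ∈ (Set.toFinite (treeSide G s(u, w) w)).toFinset, g x := by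
  have huniv : (Finset.univ : Finset V) =
      insert u ((G.neighborFinset u).biUnion
        (fun w => (Set.toFinite (treeSide G s(u, w) w)).toFinset)) := by
    apply Finset.ext
    intro x
    simp only [Finset.mem_univ, true_iff, Finset.mem_insert, Finset.mem_biUnion,
      Set.Finite.mem_toFinset, SimpleGraph.mem_neighborFinset _ _]
    by_cases hx : x = u
    · exact Or.inl hx
    · obtain ⟨w, hadj, hmem⟩ := exists_treeSide hG hx
      exact Or.inr ⟨w, hadj, hmem⟩
  rw [huniv, Finset.sum_insert (not_mem_biUnion_sides hG u _ le_rfl),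
    Finset.sum_biUnion (pairwiseDisjoint_sides hG u _ le_rfl)]

lemma sum_partition_side (hG : G.IsTree) (g : V → ℤ) {u v : V} (h : G.Adj u v) :
    ∑ x ∈ (Set.toFinite (treeSide G s(u, v) u)).toFinset, g x
      = g u + ∑ w ∈ (G.neighborFinset u).erase v,
          ∑ x ∈ (Set.toFinite (treeSide G s(u, w) w)).toFinset, g x := by
  have hset : (Set.toFinite (treeSide G s(u, v) u)).toFinset =
      insert u (((G.neighborFinset u).erase v).biUnion
        (fun w => (Set.toFinite (treeSide G s(u, w) w)).toFinset)) := by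
    apply Finset.ext
    intro x
    simp only [Finset.mem_insert, Finset.mem_biUnion, Set.Finite.mem_toFinset,
      Finset.mem_erase, SimpleGraph.mem_neighborFinset _ _]
    constructor
    · intro hx
      by_cases hxu : x = u
      · exact Or.inl hxu
      · obtain ⟨w, hadj, hwv, hmem⟩ := exists_treeSide_ne hG h hx hxu
        exact Or.inr ⟨w, ⟨hwv, hadj⟩, hmem⟩
    · rintro (rfl | ⟨w, ⟨hwv, hadj⟩, hmem⟩)
      · exact self_mem_treeSide
      · exact treeSide_subset hG h hadj hwv hmem
  rw [hset, Finset.sum_insert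
      (not_mem_biUnion_sides hG u _ (Finset.erase_subset _ _)),
    Finset.sum_biUnion (pairwiseDisjoint_sides hG u _ (Finset.erase_subset _ _))]


end Helpers

/-- Let `Γ` be a finite tree with at least one vertex and `d` an integer.  Suppose each pair
`(e,u)` of an edge and an endpoint is assigned an integer `md e u` with
`md e u + md e v = d` for the two endpoints `u, v` of each edge `e`.  Then there is a unique
function `f : V → ℤ` whose total sum is `d` and such that for every edge `e` and endpoint
`u ∈ e`, the sum of `f` over the side `Y(e,u)` equals `md e u`. -/
theorem exists_unique_multidegree_on_tree {V : Type*} [Fintype V] [Nonempty V]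
    (G : SimpleGraph V) (hG : G.IsTree) (d : ℤ) (md : Sym2 V → V → ℤ)
    (hmd : ∀ ⦃u v : V⦄, G.Adj u v → md s(u, v) u + md s(u, v) v = d) :
    ∃! f : V → ℤ,
      (∑ v : V, f v) = d ∧
        ∀ e ∈ G.edgeSet, ∀ u ∈ e,
          (∑ v ∈ (Set.toFinite (treeSide G e u)).toFinset, f v) = md e u := by
  classical
  set f : V → ℤ := fun v => d - ∑ w ∈ G.neighborFinset v, md s(v, w) w with hf
  have key : ∀ n : ℕ, ∀ u v : V, G.Adj u v →
      ((Set.toFinite (treeSide G s(u, v) u)).toFinset).card ≤ n →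
      ∑ x ∈ (Set.toFinite (treeSide G s(u, v) u)).toFinset, f x = md s(u, v) u := by
    intro n
    induction n with
    | zero =>
      intro u v h hc
      have : u ∈ (Set.toFinite (treeSide G s(u, v) u)).toFinset := by
        rw [Set.Finite.mem_toFinset]; exact self_mem_treeSide
      have := Finset.card_pos.2 ⟨u, this⟩
      omega
    | succ n ih =>
      intro u v h hc
      rw [sum_partition_side hG f h]
      have humem : u ∈ (Set.toFinite (treeSide G s(u, v) u)).toFinset := by
        rw [Set.Finite.mem_toFinset]; exact self_mem_treeSide
      have hsub : ∀ w ∈ (G.neighborFinset u).erase v,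
          ∑ x ∈ (Set.toFinite (treeSide G s(u, w) w)).toFinset, f x = md s(u, w) w := by
        intro w hw
        have hwv : w ≠ v := (Finset.mem_erase.1 hw).1
        have hadj : G.Adj u w :=
          (SimpleGraph.mem_neighborFinset _ _ _).1 (Finset.mem_erase.1 hw).2
        have hsubset : (Set.toFinite (treeSide G s(u, w) w)).toFinset ⊆
            (Set.toFinite (treeSide G s(u, v) u)).toFinset := by
          intro x hx
          rw [Set.Finite.mem_toFinset] at hx ⊢
          exact treeSide_subset hG h hadj hwv hx
        have hu_not : u ∉ (Set.toFinite (treeSide G s(u, w) w)).toFinset := by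
          rw [Set.Finite.mem_toFinset]
          exact u_not_mem_treeSide hG hadj
        have hcard : ((Set.toFinite (treeSide G s(u, w) w)).toFinset).card <
            ((Set.toFinite (treeSide G s(u, v) u)).toFinset).card :=
          Finset.card_lt_card ⟨hsubset, fun h2 => hu_not (h2 humem)⟩
        have := ih w u hadj.symm (by rw [Sym2.eq_swap]; omega)
        rwa [Sym2.eq_swap] at this
      rw [Finset.sum_congr rfl hsub]
      have hsplit : md s(u, v) v + ∑ w ∈ (G.neighborFinset u).erase v, md s(u, w) w
          = ∑ w ∈ G.neighborFinset u, md s(u, w) w :=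
        Finset.add_sum_erase _ (fun w => md s(u, w) w) ((SimpleGraph.mem_neighborFinset _ _ _).2 h)
      have := hmd h
      simp only [hf]
      linarith
  have key' : ∀ u w : V, G.Adj u w →
      ∑ x ∈ (Set.toFinite (treeSide G s(u, w) w)).toFinset, f x = md s(u, w) w := by
    intro u w h
    have := key _ w u h.symm le_rfl
    rwa [Sym2.eq_swap] at this
  refine ⟨f, ⟨?_, ?_⟩, ?_⟩
  · obtain ⟨u⟩ := (inferInstance : Nonempty V)
    rw [sum_partition hG f u,
      Finset.sum_congr rfl (fun w hw =>
        key' u w ((SimpleGraph.mem_neighborFinset _ _ _).1 hw))]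
    simp only [hf]
    ring
  · intro e he u hu
    obtain ⟨v, rfl⟩ := Sym2.mem_iff_exists.1 hu
    exact key _ u v ((SimpleGraph.mem_edgeSet G).1 he) le_rfl
  · intro g hg
    funext x
    have h1 := sum_partition hG g x
    have h2 : ∀ w ∈ G.neighborFinset x,
        ∑ y ∈ (Set.toFinite (treeSide G s(x, w) w)).toFinset, g y = md s(x, w) w := by
      intro w hw
      have hadj : G.Adj x w := (SimpleGraph.mem_neighborFinset _ _ _).1 hw
      exact hg.2 s(x, w) ((SimpleGraph.mem_edgeSet G).2 hadj) w (Sym2.mem_mk_right x w)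
    rw [Finset.sum_congr rfl h2, hg.1] at h1
    simp only [hf]
    linarith
end

section
/- Let Γ be a finite tree with vertex set V and at least one vertex, and let d be an integer. Suppose that to each pair (e,u) of an edge e of Γ and an endpoint u of e there is assigned an integer md(e,u) such that md(e,u) + md(e,v) = d whenever u and v are the two endpoints of e. Define f : V → ℤ by f(v) = d − Σ_e md(e, w_e), where the sum runs over all edges e incident to v and w_e denotes the endpoint of e other than v. Then the sum of f over all of V equals d, and for every edge e and endpoint u of e, the sum of f over the side Y(e,u) equals md(e,u). -/
open Finset

namespace MultidegreeAux

open SimpleGraph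

lemma induce_acyclic {V : Type*} {G : SimpleGraph V} (h : G.IsAcyclic) (S : Set V) :
    (G.induce S).IsAcyclic := by
  intro v c hc
  exact h (c.map (SimpleGraph.Embedding.induce S).toHom)
    (hc.map Subtype.val_injective)

lemma induce_reach_connected {V : Type*} {G H : SimpleGraph V} (hle : H ≤ G) (u : V) :
    (G.induce {w | H.Reachable u w}).Connected := by
  classical
  apply G.induce_connected_of_patches u (by exact Reachable.refl u)
  intro v hv
  obtain ⟨p⟩ := (hv : H.Reachable u v)
  have hq : (p.mapLe hle).support = p.support := by
    rw [show (p.mapLe hle) = p.map (Hom.ofLE hle) from rfl,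
      Walk.support_map, show ⇑(Hom.ofLE hle) = id from rfl, List.map_id]
  refine ⟨{w | w ∈ (p.mapLe hle).support}, ?_, (p.mapLe hle).start_mem_support,
    (p.mapLe hle).end_mem_support, ?_⟩
  · intro w hw
    rw [Set.mem_setOf_eq, hq] at hw
    exact ⟨p.takeUntil w hw⟩
  · exact ((p.mapLe hle).connected_induce_support).preconnected _ _

/-- Key counting lemma: over a set inducing a connected subgraph of a tree, the sum of `f`
is `d` minus the crossing contribution. -/
lemma key {V : Type*} [Fintype V] {G : SimpleGraph V} (hG : G.IsAcyclic) (d : ℤ)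
    (md : Sym2 V → V → ℤ)
    (hmd : ∀ ⦃u v : V⦄, G.Adj u v → md s(u, v) u + md s(u, v) v = d)
    (f : V → ℤ)
    (hf : ∀ v : V, f v = d - ∑ w ∈ (Set.toFinite (G.neighborSet v)).toFinset, md s(v, w) w)
    (S : Set V) (hconn : (G.induce S).Connected) :
    ∑ x ∈ (Set.toFinite S).toFinset, f x
      = d - ∑ x ∈ (Set.toFinite S).toFinset,
          ∑ w ∈ (Set.toFinite (G.neighborSet x \ S)).toFinset, md s(x, w) w := by
  classical
  set SF := (Set.toFinite S).toFinset with hSFdef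
  have hSFmem : ∀ x, x ∈ SF ↔ x ∈ S := fun x => Set.Finite.mem_toFinset _
  letI : Fintype ↥S := S.toFinite.fintype
  set G' := G.induce S with hG'def
  have hG' : G'.IsTree := ⟨hconn, induce_acyclic hG S⟩
  have hcard : Fintype.card ↥S = SF.card := by
    rw [hSFdef, Set.Finite.card_toFinset]
  -- tree edge count
  have htree : G'.edgeFinset.card + 1 = SF.card := by
    rw [← hcard]; exact hG'.card_edgeFinset
  -- handshake
  have hhand : ∑ v : ↥S, G'.degree v = 2 * G'.edgeFinset.card :=
    G'.sum_degrees_eq_twice_card_edges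
  -- degree transfer
  have hdeg : ∀ (x : ↥S), G'.degree x = (SF.filter (fun w => G.Adj x.1 w)).card := by
    intro x
    have himg : (SF.filter (fun w => G.Adj x.1 w)) = (G'.neighborFinset x).image Subtype.val := by
      ext w
      simp only [Finset.mem_filter, hSFmem, Finset.mem_image, SimpleGraph.mem_neighborFinset,
        hG'def, SimpleGraph.comap_adj, Function.Embedding.coe_subtype]
      constructor
      · rintro ⟨hw, ha⟩; exact ⟨⟨w, hw⟩, ha, rfl⟩
      · rintro ⟨a, ha, rfl⟩; exact ⟨a.2, ha⟩
    rw [himg, Finset.card_image_of_injective _ Subtype.val_injective]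
    rfl
  have hDS : ∑ x ∈ SF, (SF.filter (fun w => G.Adj x w)).card
      = 2 * G'.edgeFinset.card := by
    rw [← hhand]
    rw [Finset.sum_subtype SF (p := fun x => x ∈ S) hSFmem
      (fun x => (SF.filter (fun w => G.Adj x w)).card)]
    exact Finset.sum_congr rfl fun x _ => (hdeg x).symm
  -- internal double sum
  set A : ℤ := ∑ x ∈ SF, ∑ w ∈ SF, ite (G.Adj x w) (md s(x, w) w) 0 with hAdef
  have hAA' : A = ∑ x ∈ SF, ∑ w ∈ SF, ite (G.Adj x w) (md s(x, w) x) 0 := by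
    rw [hAdef, Finset.sum_comm]
    refine Finset.sum_congr rfl fun x _ => Finset.sum_congr rfl fun w _ => ?_
    rw [G.adj_comm, Sym2.eq_swap]
  have h2A : A + A = ((2 * G'.edgeFinset.card : ℕ) : ℤ) * d := by
    nth_rewrite 2 [hAA']
    rw [hAdef, ← Finset.sum_add_distrib, ← hDS, Nat.cast_sum, Finset.sum_mul]
    refine Finset.sum_congr rfl fun x _ => ?_
    rw [← Finset.sum_add_distrib]
    have hpt : ∀ w ∈ SF, (ite (G.Adj x w) (md s(x, w) w) 0 + ite (G.Adj x w) (md s(x, w) x) 0)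
        = ite (G.Adj x w) d 0 := by
      intro w _
      by_cases h : G.Adj x w
      · simp only [h, if_true]
        have := hmd h
        linarith
      · simp [h]
    rw [Finset.sum_congr rfl hpt, ← Finset.sum_filter, Finset.sum_const, nsmul_eq_mul]
  have hA : A = ((SF.card : ℤ) - 1) * d := by
    have h2 : (G'.edgeFinset.card : ℤ) + 1 = SF.card := by exact_mod_cast htree
    have h3 : ((2 * G'.edgeFinset.card : ℕ) : ℤ) = 2 * ((SF.card : ℤ) - 1) := by
      push_cast; linarith
    rw [h3] at h2A
    linarith
  -- splitting the neighbor sums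
  have hsplit : ∀ x ∈ SF, (∑ w ∈ (Set.toFinite (G.neighborSet x)).toFinset, md s(x, w) w)
      = (∑ w ∈ SF, ite (G.Adj x w) (md s(x, w) w) 0)
        + ∑ w ∈ (Set.toFinite (G.neighborSet x \ S)).toFinset, md s(x, w) w := by
    intro x _
    have h1 : (Set.toFinite (G.neighborSet x)).toFinset
        = (SF.filter (fun w => G.Adj x w)) ∪ (Set.toFinite (G.neighborSet x \ S)).toFinset := by
      ext w
      simp only [Set.Finite.mem_toFinset, Finset.mem_union, Finset.mem_filter, hSFmem,
        SimpleGraph.mem_neighborSet, Set.mem_diff]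
      by_cases hw : w ∈ S <;> tauto
    have hdisj : Disjoint (SF.filter (fun w => G.Adj x w))
        ((Set.toFinite (G.neighborSet x \ S)).toFinset) := by
      rw [Finset.disjoint_left]
      intro w hw1 hw2
      rw [Finset.mem_filter, hSFmem] at hw1
      rw [Set.Finite.mem_toFinset, Set.mem_diff] at hw2
      exact hw2.2 hw1.1
    rw [h1, Finset.sum_union hdisj, Finset.sum_filter]
  rw [Finset.sum_congr rfl (fun x hx => by rw [hf x, hsplit x hx])]
  rw [Finset.sum_sub_distrib, Finset.sum_const, Finset.sum_add_distrib, nsmul_eq_mul]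
  rw [← hAdef]
  rw [hA]
  ring

lemma side_sum {V : Type*} [Fintype V] {G : SimpleGraph V} (hG : G.IsTree) (d : ℤ)
    (md : Sym2 V → V → ℤ)
    (hmd : ∀ ⦃u v : V⦄, G.Adj u v → md s(u, v) u + md s(u, v) v = d)
    (f : V → ℤ)
    (hf : ∀ v : V, f v = d - ∑ w ∈ (Set.toFinite (G.neighborSet v)).toFinset, md s(v, w) w)
    {u v : V} (huv : G.Adj u v) :
    (∑ x ∈ (Set.toFinite (treeSide G s(u, v) u)).toFinset, f x) = md s(u, v) u := by
  classical
  set S : Set V := treeSide G s(u, v) u with hSdef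
  have hu : u ∈ S := Reachable.refl u
  have hv : v ∉ S := by
    have hb := (isAcyclic_iff_forall_adj_isBridge.mp hG.IsAcyclic) huv
    rw [isBridge_iff] at hb
    exact hb
  have hstep : ∀ x w, x ∈ S → G.Adj x w → s(x, w) ≠ s(u, v) → w ∈ S := by
    intro x w hx ha hne
    have hadj : (G.deleteEdges {s(u, v)}).Adj x w := by
      rw [SimpleGraph.deleteEdges_adj]
      exact ⟨ha, by simpa using hne⟩
    exact (hx : (G.deleteEdges {s(u,v)}).Reachable u x).trans hadj.reachable
  have hconn : (G.induce S).Connected :=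
    induce_reach_connected (SimpleGraph.deleteEdges_le _) u
  rw [key hG.IsAcyclic d md hmd f hf S hconn]
  have hB : (∑ x ∈ (Set.toFinite S).toFinset,
      ∑ w ∈ (Set.toFinite (G.neighborSet x \ S)).toFinset, md s(x, w) w) = md s(u, v) v := by
    rw [Finset.sum_eq_single u]
    · have hset : (Set.toFinite (G.neighborSet u \ S)).toFinset = {v} := by
        ext w
        rw [Set.Finite.mem_toFinset, Set.mem_diff, SimpleGraph.mem_neighborSet,
          Finset.mem_singleton]
        constructor
        · rintro ⟨ha, hw⟩
          by_contra hne
          by_cases heq : s(u, w) = s(u, v)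
          · rw [Sym2.eq_iff] at heq
            rcases heq with ⟨-, rfl⟩ | ⟨h1, h2⟩
            · exact hne rfl
            · exact absurd h1 huv.ne
          · exact hw (hstep u w hu ha heq)
        · rintro rfl
          exact ⟨huv, hv⟩
      rw [hset, Finset.sum_singleton]
    · intro x hx hxu
      apply Finset.sum_eq_zero
      intro w hw
      rw [Set.Finite.mem_toFinset, Set.mem_diff, SimpleGraph.mem_neighborSet] at hw
      rw [Set.Finite.mem_toFinset] at hx
      exfalso
      by_cases heq : s(x, w) = s(u, v)
      · rw [Sym2.eq_iff] at heq
        rcases heq with ⟨rfl, rfl⟩ | ⟨rfl, rfl⟩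
        · exact hxu rfl
        · exact hv hx
      · exact hw.2 (hstep x w hx hw.1 heq)
    · intro hnot
      exact absurd ((Set.Finite.mem_toFinset _).mpr hu) hnot
  rw [hB]
  have := hmd huv
  linarith

end MultidegreeAux

/-- Let `Γ` be a finite tree with at least one vertex and `d` an integer.  Suppose each pair
`(e,u)` of an edge and an endpoint is assigned an integer `md e u` with
`md e u + md e v = d` for the two endpoints `u, v` of each edge `e`.  Define
`f v = d - ∑_{e ∋ v} md e w_e`, the sum running over the edges `e` incident to `v`,
with `w_e` the endpoint of `e` other than `v` (equivalently, the sum over the neighbors `w`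
of `v` of `md s(v,w) w`).  Then the total sum of `f` is `d`, and for every edge `e` and
endpoint `u ∈ e`, the sum of `f` over the side `Y(e,u)` equals `md e u`. -/
theorem multidegree_on_tree_formula {V : Type*} [Fintype V] [Nonempty V]
    (G : SimpleGraph V) (hG : G.IsTree) (d : ℤ) (md : Sym2 V → V → ℤ)
    (hmd : ∀ ⦃u v : V⦄, G.Adj u v → md s(u, v) u + md s(u, v) v = d)
    (f : V → ℤ)
    (hf : ∀ v : V, f v = d - ∑ w ∈ (Set.toFinite (G.neighborSet v)).toFinset, md s(v, w) w) :
    (∑ v : V, f v) = d ∧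
      ∀ e ∈ G.edgeSet, ∀ u ∈ e,
        (∑ v ∈ (Set.toFinite (treeSide G e u)).toFinset, f v) = md e u := by
  classical
  constructor
  · have hconn : (G.induce (Set.univ : Set V)).Connected :=
      (SimpleGraph.induceUnivIso G).connected_iff.mpr hG.isConnected
    have hkey := MultidegreeAux.key hG.IsAcyclic d md hmd f hf Set.univ hconn
    have hzero : (∑ x ∈ (Set.toFinite (Set.univ : Set V)).toFinset,
        ∑ w ∈ (Set.toFinite (G.neighborSet x \ Set.univ)).toFinset, md s(x, w) w) = 0 := by
      apply Finset.sum_eq_zero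
      intro x _
      apply Finset.sum_eq_zero
      intro w hw
      rw [Set.Finite.mem_toFinset, Set.diff_univ] at hw
      exact absurd hw (Set.notMem_empty w)
    rw [hzero, sub_zero] at hkey
    rw [← hkey]
    apply Finset.sum_congr _ (fun _ _ => rfl)
    ext x
    simp
  · intro e he u hu
    revert he hu
    refine Sym2.ind (fun a b he hu => ?_) e
    rw [SimpleGraph.mem_edgeSet] at he
    rw [Sym2.mem_iff] at hu
    rcases hu with rfl | rfl
    · exact MultidegreeAux.side_sum hG d md hmd f hf he
    · rw [Sym2.eq_swap]
      exact MultidegreeAux.side_sum hG d md hmd f hf he.symm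
end

section
/- Let p be a prime and n a natural number. Then the projectivization ℙ(ℚ_p^{n+1}) of the vector space ℚ_p^{n+1} over ℚ_p, equipped with the quotient topology, is a compact topological space. -/
open scoped LinearAlgebra.Projectivization

/-- The quotient topology on the projectivization of a topological vector space. -/
instance projectivizationTopology (K V : Type*) [DivisionRing K] [AddCommGroup V]
    [Module K V] [TopologicalSpace V] : TopologicalSpace (ℙ K V) :=
  inferInstanceAs (TopologicalSpace (Quotient (projectivizationSetoid K V)))

/-- Let `p` be a prime and `n` a natural number.  The projectivization `ℙ(ℚ_p^{n+1})` of the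
vector space `ℚ_p^{n+1}` over the `p`-adic numbers, equipped with the quotient topology,
is a compact topological space. -/
theorem padic_projective_space_compact (p : ℕ) [Fact p.Prime] (n : ℕ) :
    CompactSpace (ℙ ℚ_[p] (Fin (n + 1) → ℚ_[p])) := by
  set E := Fin (n + 1) → ℚ_[p]
  -- the unit sphere is compact
  have hS : IsCompact (Metric.sphere (0 : E) 1) := isCompact_sphere 0 1
  -- map from the sphere to projective space
  have hne : ∀ v : Metric.sphere (0 : E) 1, (v : E) ≠ 0 := by
    intro v hv
    have := v.2
    rw [mem_sphere_iff_norm, hv] at this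
    simp at this
  let f : Metric.sphere (0 : E) 1 → ℙ ℚ_[p] E :=
    fun v => Projectivization.mk ℚ_[p] (v : E) (hne v)
  have hcont : Continuous f := by
    have : f = fun (v : Metric.sphere (0 : E) 1) => Quotient.mk'' (⟨(v : E), hne v⟩ : {w : E // w ≠ 0}) := rfl
    rw [this]
    exact continuous_quotient_mk'.comp (continuous_subtype_val.subtype_mk _)
  have hsurj : Function.Surjective f := by
    intro q
    induction q using Projectivization.ind with
    | h v hv =>
      -- find the coordinate realizing the sup norm
      obtain ⟨i, hi⟩ : ∃ i, ‖v‖ = ‖v i‖ := by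
        have h1 : ‖v‖₊ = Finset.univ.sup (fun i => ‖v i‖₊) := Pi.nnnorm_def v
        obtain ⟨i, _, hi⟩ := Finset.exists_mem_eq_sup Finset.univ
          (Finset.univ_nonempty) (fun i => ‖v i‖₊)
        exact ⟨i, congrArg NNReal.toReal (h1.trans hi)⟩
      have hvnorm : ‖v‖ ≠ 0 := norm_ne_zero_iff.mpr hv
      have hvi : v i ≠ 0 := by
        intro h
        rw [hi, h, norm_zero] at hvnorm
        exact hvnorm rfl
      set c : ℚ_[p] := (v i)⁻¹ with hc
      have hcne : c ≠ 0 := inv_ne_zero hvi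
      have hnorm : ‖c • v‖ = 1 := by
        rw [norm_smul, hc, norm_inv, ← hi, inv_mul_cancel₀ hvnorm]
      refine ⟨⟨c • v, by rwa [mem_sphere_iff_norm, sub_zero]⟩, ?_⟩
      show Projectivization.mk ℚ_[p] (c • v) _ = Projectivization.mk ℚ_[p] v hv
      rw [Projectivization.mk_eq_mk_iff']
      exact ⟨c, rfl⟩
  constructor
  have : Set.univ = f '' Set.univ := by
    rw [Set.image_univ, Set.range_eq_univ.mpr hsurj]
  rw [this]
  exact ((isCompact_iff_isCompact_univ.mp hS).image hcont)
end

section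
/- Let B and Y be Hausdorff topological spaces, π : Y → B a continuous map, and b a point of B. Suppose Y is the disjoint union of finitely many open-and-closed subsets Y_1, …, Y_n such that each restriction π|_{Y_i} : Y_i → B is a proper map, the restrictions π|_{Y_i} for i = 1, …, m are homeomorphisms onto B, and b does not lie in π(Y_j) for any j = m+1, …, n. Then there exists an open neighborhood U of b in B such that for every b' ∈ U the fiber π^{-1}(b') has exactly m elements. -/
/-- Let `B`, `Y` be Hausdorff spaces, `π : Y → B` continuous, and `b ∈ B`.  Suppose `Y` is
the disjoint union of finitely many clopen subsets `Y_1, …, Y_n` such that each restriction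
`π|_{Y_i}` is proper, the restrictions `π|_{Y_i}` for `i < m` are homeomorphisms onto `B`,
and `b ∉ π(Y_j)` for `j ≥ m`.  Then there is an open neighborhood `U` of `b` such that for
every `b' ∈ U` the fiber `π⁻¹(b')` has exactly `m` elements. -/
theorem locally_constant_fiber_count {B Y : Type*} [TopologicalSpace B] [TopologicalSpace Y]
    [T2Space B] [T2Space Y] (π : Y → B) (hπ : Continuous π) (b : B)
    (n m : ℕ) (hmn : m ≤ n) (Ys : Fin n → Set Y)
    (hclopen : ∀ i, IsClopen (Ys i))
    (hdisj : Pairwise (Function.onFun Disjoint Ys))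
    (hcover : (⋃ i, Ys i) = Set.univ)
    (hproper : ∀ i, IsProperMap ((Ys i).restrict π))
    (hhomeo : ∀ i : Fin n, (i : ℕ) < m → IsHomeomorph ((Ys i).restrict π))
    (hb : ∀ i : Fin n, m ≤ (i : ℕ) → b ∉ π '' Ys i) :
    ∃ U : Set B, IsOpen U ∧ b ∈ U ∧
      ∀ b' ∈ U, (π ⁻¹' {b'}).Finite ∧ (π ⁻¹' {b'}).ncard = m := by
  classical
  have himg_closed : ∀ i, IsClosed (π '' Ys i) := fun i => by
    rw [← Set.range_restrict]
    exact (hproper i).isClosedMap.isClosed_range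
  refine ⟨(⋃ i : Fin n, ⋃ (_ : m ≤ (i : ℕ)), π '' Ys i)ᶜ, ?_, ?_, ?_⟩
  · exact isOpen_compl_iff.mpr (isClosed_iUnion_of_finite fun i =>
      isClosed_iUnion_of_finite fun hi => himg_closed i)
  · simp only [Set.mem_compl_iff, Set.mem_iUnion, not_exists]
    exact fun i hi => hb i hi
  · intro b' hb'
    simp only [Set.mem_compl_iff, Set.mem_iUnion, not_exists] at hb'
    -- define the m points in the fiber
    have hsurj : ∀ j : Fin m, Function.Surjective ((Ys (Fin.castLE hmn j)).restrict π) :=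
      fun j => (hhomeo (Fin.castLE hmn j) j.isLt).bijective.2
    set f : Fin m → Y := fun j => ((Function.surjInv (f := (Ys (Fin.castLE hmn j)).restrict π) (hsurj j) b' : Ys (Fin.castLE hmn j)) : Y) with hf
    have hfmem : ∀ j, (f j) ∈ Ys (Fin.castLE hmn j) := fun j =>
      (Function.surjInv (f := (Ys (Fin.castLE hmn j)).restrict π) (hsurj j) b').2
    have hfπ : ∀ j, π (f j) = b' := fun j => Function.surjInv_eq (hsurj j) b'
    have hinj : Function.Injective f := by
      intro j k hjk
      by_contra hne
      have hne' : Fin.castLE hmn j ≠ Fin.castLE hmn k := by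
        simpa using fun h => hne (Fin.castLE_injective hmn h)
      exact (hdisj hne').le_bot ⟨hfmem j, hjk ▸ hfmem k⟩
    have hF : π ⁻¹' {b'} = Set.range f := by
      ext y
      simp only [Set.mem_preimage, Set.mem_singleton_iff, Set.mem_range]
      constructor
      · intro hy
        have hy' : y ∈ ⋃ i, Ys i := hcover ▸ Set.mem_univ y
        obtain ⟨i, hi⟩ := Set.mem_iUnion.mp hy'
        rcases lt_or_ge (i : ℕ) m with him | him
        · refine ⟨⟨i, him⟩, ?_⟩
          have hcast : Fin.castLE hmn ⟨(i : ℕ), him⟩ = i := by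
            ext; simp
          have hm : f ⟨(i : ℕ), him⟩ ∈ Ys i := by simpa only [hcast] using hfmem ⟨(i : ℕ), him⟩
          have hinjr := (hhomeo i him).bijective.1
          have heq : ((Ys i).restrict π) ⟨f ⟨(i : ℕ), him⟩, hm⟩ = ((Ys i).restrict π) ⟨y, hi⟩ := by
            change π (f ⟨(i : ℕ), him⟩) = π y
            rw [hfπ, hy]
          exact congrArg Subtype.val (hinjr heq)
        · exact absurd ⟨y, hi, hy⟩ (hb' i him)
      · rintro ⟨j, rfl⟩; exact hfπ j
    rw [hF]
    refine ⟨Set.finite_range f, ?_⟩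
    rw [← Set.image_univ, Set.ncard_image_of_injective _ hinj]
    simp [Set.ncard_univ]
end
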